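/- Let Z be a nonnegative supermartingale with Z_0 = 1 (in continuous time, right-continuous paths). Then limsup_{t→∞} (1/t) ln Z_t ≤ 0 almost surely. -/

import Mathlib

/-!
Sampling `Z` on the dyadic grid `n + i / 2 ^ m` gives discrete-time supermartingales, so optional
stopping at the first passage above `e ^ (ε n)` and Markov's inequality bound the probability
that `Z` exceeds `e ^ (ε n)` somewhere on the grid by `E[Z_0] e ^ (-ε n)`; by right-continuity
the grid sees every `t ≥ n`. These bounds are summable, so by Borel–Cantelli almost surely
`Z_t ≤ e ^ (ε ⌊t⌋) ≤ e ^ (ε t)` for all large `t`, i.e. `(1/t) ln Z_t ≤ ε` eventually.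
Intersecting over `ε = 1 / (j + 1)` gives the claim.
-/

open MeasureTheory Filter

theorem Real.log_le_of_le_exp {x y : ℝ} (hx : 0 ≤ x) (hy : 0 ≤ y) (h : x ≤ Real.exp y) :
    Real.log x ≤ y := by
  rcases hx.eq_or_lt with rfl | hx
  · simpa using hy
  · exact (Real.log_le_iff_le_exp hx).mpr h

theorem exists_dyadic_mem_Ico {a t δ : ℝ} (hat : a ≤ t) (hδ : 0 < δ) :
    ∃ m i : ℕ, a + i / 2 ^ m ∈ Set.Ico t (t + δ) := by
  obtain ⟨m, hm⟩ := exists_pow_lt_of_lt_one hδ (by norm_num : (1 : ℝ) / 2 < 1)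
  have h2m : (0 : ℝ) < 2 ^ m := by positivity
  rw [div_pow, one_pow, div_lt_iff₀ h2m] at hm
  refine ⟨m, ⌈(t - a) * 2 ^ m⌉₊, ?_, ?_⟩
  · have := Nat.le_ceil ((t - a) * 2 ^ m)
    rw [← sub_le_iff_le_add', le_div_iff₀ h2m]
    linarith
  · have := Nat.ceil_lt_add_one (mul_nonneg (sub_nonneg.mpr hat) h2m.le)
    rw [← lt_sub_iff_add_lt', div_lt_iff₀ h2m]
    nlinarith

theorem ContinuousWithinAt.le_of_forall_dyadic_le {f : ℝ → ℝ} {a t c : ℝ}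
    (hf : ContinuousWithinAt f (Set.Ici t) t) (hat : a ≤ t)
    (h : ∀ m i : ℕ, f (a + i / 2 ^ m) ≤ c) : f t ≤ c := by
  refine ContinuousWithinAt.closure_le (s := {x | t ≤ x ∧ ∃ m i : ℕ, x = a + i / 2 ^ m}) ?_
    (hf.mono fun x hx => hx.1) continuousWithinAt_const ?_
  · refine Metric.mem_closure_iff.mpr fun δ hδ => ?_
    obtain ⟨m, i, hlo, hhi⟩ := exists_dyadic_mem_Ico hat hδ
    refine ⟨_, ⟨hlo, m, i, rfl⟩, ?_⟩
    rw [Real.dist_eq, abs_sub_lt_iff]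
    constructor <;> linarith
  · rintro _ ⟨-, m, i, rfl⟩
    exact h m i

theorem eventually_one_div_mul_log_le_of_dyadic {f : ℝ → ℝ} {ε : ℝ} (hε : 0 ≤ ε) (hf₀ : 0 ≤ f)
    (hf : ∀ t, ContinuousWithinAt f (Set.Ici t) t)
    (h : ∀ᶠ n : ℕ in atTop, ∀ m i : ℕ, f (n + i / 2 ^ m) ≤ Real.exp (ε * n)) :
    ∀ᶠ t in atTop, 1 / t * Real.log (f t) ≤ ε := by
  obtain ⟨N, hN⟩ := eventually_atTop.mp h
  filter_upwards [eventually_ge_atTop ((N : ℝ) + 1)] with t ht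
  have ht₀ : 0 < t := by linarith [N.cast_nonneg (α := ℝ)]
  have hfloor : (⌊t⌋₊ : ℝ) ≤ t := Nat.floor_le ht₀.le
  have hft : f t ≤ Real.exp (ε * t) := calc
    f t ≤ Real.exp (ε * ⌊t⌋₊) :=
      (hf t).le_of_forall_dyadic_le hfloor (hN _ (Nat.le_floor (by linarith)))
    _ ≤ Real.exp (ε * t) := by gcongr
  calc 1 / t * Real.log (f t) ≤ 1 / t * (ε * t) := by
        gcongr
        exact Real.log_le_of_le_exp (hf₀ t) (by positivity) hft
    _ = ε := by field_simp

theorem limsup_nonpos_of_forall_eventually_le_one_div {α : Type*} {f : α → ℝ} {l : Filter α}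
    (h : ∀ j : ℕ, ∀ᶠ x in l, f x ≤ 1 / (j + 1)) : limsup f l ≤ 0 := by
  rw [limsup_eq]
  by_cases hbdd : BddBelow {a | ∀ᶠ x in l, f x ≤ a}
  · refine le_of_forall_pos_lt_add fun ε hε => ?_
    obtain ⟨j, hj⟩ := exists_nat_one_div_lt hε
    exact (csInf_le hbdd (h j)).trans_lt (by linarith)
  · -- in `ℝ`, `sInf` of a set that is not bounded below is `0`
    rw [Real.sInf_of_not_bddBelow hbdd]

namespace MeasureTheory

variable {Ω : Type*} {m0 : MeasurableSpace Ω} {μ : Measure Ω}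

theorem Supermartingale.integral_stoppedValue_le_integral_zero
    {𝒢 : Filtration ℕ m0} [SigmaFiniteFiltration μ 𝒢] {Y : ℕ → Ω → ℝ} {τ : Ω → ℕ∞}
    (hY : Supermartingale Y 𝒢 μ) (hτ : IsStoppingTime 𝒢 τ) {N : ℕ} (hbdd : ∀ ω, τ ω ≤ N) :
    ∫ ω, stoppedValue Y τ ω ∂μ ≤ ∫ ω, Y 0 ω ∂μ := by
  have h : -∫ ω, Y 0 ω ∂μ ≤ -∫ ω, stoppedValue Y τ ω ∂μ := by
    rw [← integral_neg, ← integral_neg]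
    exact hY.neg.expected_stoppedValue_mono (isStoppingTime_const 𝒢 0) hτ (fun _ => zero_le) hbdd
  linarith

theorem Supermartingale.maximal_ineq [IsFiniteMeasure μ]
    {𝒢 : Filtration ℕ m0} {Y : ℕ → Ω → ℝ} (hY : Supermartingale Y 𝒢 μ) (hnonneg : 0 ≤ Y)
    (c : ℝ) (n : ℕ) :
    c * μ.real {ω | ∃ k ≤ n, c ≤ Y k ω} ≤ ∫ ω, Y 0 ω ∂μ := by
  set τ : Ω → ℕ∞ := fun ω => (hittingBtwn Y (Set.Ici c) 0 n ω : ℕ)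
  have hτ : IsStoppingTime 𝒢 τ :=
    hY.stronglyAdapted.adapted.isStoppingTime_hittingBtwn measurableSet_Ici
  have hbdd : ∀ ω, τ ω ≤ n := fun ω => WithTop.coe_le_coe.mpr (hittingBtwn_le ω)
  have hsub : {ω | ∃ k ≤ n, c ≤ Y k ω} ⊆ {ω | c ≤ stoppedValue Y τ ω} :=
    fun ω ⟨k, hk, hck⟩ => stoppedValue_hittingBtwn_mem ⟨k, ⟨Nat.zero_le k, hk⟩, hck⟩
  rcases le_or_gt c 0 with hc | hc
  · exact (mul_nonpos_of_nonpos_of_nonneg hc measureReal_nonneg).trans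
      (integral_nonneg (hnonneg 0))
  calc c * μ.real {ω | ∃ k ≤ n, c ≤ Y k ω}
      ≤ c * μ.real {ω | c ≤ stoppedValue Y τ ω} :=
        mul_le_mul_of_nonneg_left (measureReal_mono hsub) hc.le
    _ ≤ ∫ ω, stoppedValue Y τ ω ∂μ :=
      mul_meas_ge_le_integral_of_nonneg (Eventually.of_forall fun ω => hnonneg _ ω)
        (integrable_stoppedValue ℕ hτ hY.integrable hbdd) c
    _ ≤ ∫ ω, Y 0 ω ∂μ := hY.integral_stoppedValue_le_integral_zero hτ hbdd

theorem Supermartingale.measure_exists_ge_le [IsFiniteMeasure μ]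
    {𝒢 : Filtration ℕ m0} {Y : ℕ → Ω → ℝ} (hY : Supermartingale Y 𝒢 μ) (hnonneg : 0 ≤ Y)
    {c : ℝ} (hc : 0 < c) :
    μ {ω | ∃ k, c ≤ Y k ω} ≤ ENNReal.ofReal ((∫ ω, Y 0 ω ∂μ) / c) := by
  have hunion : {ω | ∃ k, c ≤ Y k ω} = ⋃ n, {ω | ∃ k ≤ n, c ≤ Y k ω} := by
    ext ω
    simp only [Set.mem_ofPred_eq, Set.mem_iUnion]
    exact ⟨fun ⟨k, hk⟩ => ⟨k, k, le_rfl, hk⟩, fun ⟨_, k, _, hk⟩ => ⟨k, hk⟩⟩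
  have hmono : Monotone fun n => {ω | ∃ k ≤ n, c ≤ Y k ω} :=
    fun _ _ hnm _ ⟨k, hk, hck⟩ => ⟨k, hk.trans hnm, hck⟩
  rw [hunion, hmono.measure_iUnion]
  refine iSup_le fun n => ?_
  rw [ENNReal.le_ofReal_iff_toReal_le (measure_ne_top _ _)
    (div_nonneg (integral_nonneg (hnonneg 0)) hc.le), le_div_iff₀ hc, mul_comm]
  exact hY.maximal_ineq hnonneg c n

def Filtration.comp {ι κ : Type*} [Preorder ι] [Preorder κ] (ℱ : Filtration ι m0) {t : κ → ι}
    (ht : Monotone t) : Filtration κ m0 where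
  seq k := ℱ (t k)
  mono' _ _ hij := ℱ.mono (ht hij)
  le' k := ℱ.le (t k)

theorem Supermartingale.comp {ι κ E : Type*} [Preorder ι] [Preorder κ] [NormedAddCommGroup E]
    [NormedSpace ℝ E] [CompleteSpace E] [LE E] {ℱ : Filtration ι m0} {Z : ι → Ω → E}
    (hZ : Supermartingale Z ℱ μ) {t : κ → ι} (ht : Monotone t) :
    Supermartingale (fun k => Z (t k)) (ℱ.comp ht) μ :=
  ⟨fun k => hZ.stronglyAdapted (t k), fun _ _ hij => hZ.condExp_ae_le (ht hij),
    fun k => hZ.integrable (t k)⟩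

theorem Supermartingale.measure_exists_dyadic_ge_le [IsFiniteMeasure μ] {ℱ : Filtration ℝ m0}
    {Z : ℝ → Ω → ℝ} (hZ : Supermartingale Z ℱ μ) (hnonneg : 0 ≤ Z) {c : ℝ} (hc : 0 < c)
    (s : ℝ) :
    μ {ω | ∃ m i : ℕ, c ≤ Z (s + i / 2 ^ m) ω} ≤ ENNReal.ofReal ((∫ ω, Z s ω ∂μ) / c) := by
  have hgrid (m : ℕ) : Monotone fun i : ℕ => s + i / 2 ^ m :=
    fun i j hij => by dsimp only; gcongr
  have hlevel (m : ℕ) : μ {ω | ∃ i : ℕ, c ≤ Z (s + i / 2 ^ m) ω} ≤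
      ENNReal.ofReal ((∫ ω, Z s ω ∂μ) / c) := by
    simpa using (hZ.comp (hgrid m)).measure_exists_ge_le (fun k => hnonneg _) hc
  have hrefine : Monotone fun m : ℕ => {ω | ∃ i : ℕ, c ≤ Z (s + i / 2 ^ m) ω} := by
    refine monotone_nat_of_le_succ fun m ω ⟨i, hi⟩ => ⟨2 * i, ?_⟩
    have hsame : ((2 * i : ℕ) : ℝ) / 2 ^ (m + 1) = i / 2 ^ m := by
      push_cast
      rw [pow_succ]
      field_simp
    rwa [hsame]
  have hunion : {ω | ∃ m i : ℕ, c ≤ Z (s + i / 2 ^ m) ω} =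
      ⋃ m : ℕ, {ω | ∃ i : ℕ, c ≤ Z (s + i / 2 ^ m) ω} := by
    ext ω
    simp only [Set.mem_ofPred_eq, Set.mem_iUnion]
  rw [hunion, hrefine.measure_iUnion]
  exact iSup_le hlevel

theorem Supermartingale.ae_eventually_dyadic_lt_exp [IsFiniteMeasure μ] {ℱ : Filtration ℝ m0}
    {Z : ℝ → Ω → ℝ} (hZ : Supermartingale Z ℱ μ) (hnonneg : 0 ≤ Z) {ε : ℝ} (hε : 0 < ε) :
    ∀ᵐ ω ∂μ, ∀ᶠ n : ℕ in atTop, ∀ m i : ℕ, Z (n + i / 2 ^ m) ω < Real.exp (ε * n) := by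
  set C := ∫ ω, Z 0 ω ∂μ
  have hC : 0 ≤ C := integral_nonneg (hnonneg 0)
  set r := Real.exp (-ε)
  have hr : r < 1 := Real.exp_lt_one_iff.mpr (neg_lt_zero.mpr hε)
  have hbound (n : ℕ) :
      μ {ω | ∃ m i : ℕ, Real.exp (ε * n) ≤ Z (n + i / 2 ^ m) ω} ≤ ENNReal.ofReal (C * r ^ n) := by
    refine (hZ.measure_exists_dyadic_ge_le hnonneg (Real.exp_pos _) n).trans
      (ENNReal.ofReal_le_ofReal ?_)
    have hdecay : ∫ ω, Z n ω ∂μ ≤ C := by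
      simpa using hZ.setIntegral_le n.cast_nonneg MeasurableSet.univ
    have hcancel : r ^ n * Real.exp (ε * n) = 1 := by
      rw [← Real.exp_nat_mul, ← Real.exp_add, ← Real.exp_zero]
      ring_nf
    rwa [div_le_iff₀ (Real.exp_pos _), mul_assoc, hcancel, mul_one]
  have hsum : ∑' n : ℕ, μ {ω | ∃ m i : ℕ, Real.exp (ε * n) ≤ Z (n + i / 2 ^ m) ω} ≠ ⊤ := by
    refine ne_top_of_le_ne_top ?_ (ENNReal.tsum_le_tsum hbound)
    rw [← ENNReal.ofReal_tsum_of_nonneg (fun n => mul_nonneg hC (by positivity))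
      ((summable_geometric_of_lt_one (Real.exp_pos _).le hr).mul_left C)]
    exact ENNReal.ofReal_ne_top
  filter_upwards [ae_eventually_notMem hsum] with ω hω
  filter_upwards [hω] with n hn m i
  exact lt_of_not_ge fun hle => hn ⟨m, i, hle⟩

theorem Supermartingale.ae_eventually_one_div_mul_log_le [IsFiniteMeasure μ]
    {ℱ : Filtration ℝ m0} {Z : ℝ → Ω → ℝ} (hZ : Supermartingale Z ℱ μ) (hnonneg : 0 ≤ Z)
    (hrc : ∀ ω t, ContinuousWithinAt (fun s => Z s ω) (Set.Ici t) t) {ε : ℝ} (hε : 0 < ε) :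
    ∀ᵐ ω ∂μ, ∀ᶠ t in atTop, 1 / t * Real.log (Z t ω) ≤ ε := by
  filter_upwards [hZ.ae_eventually_dyadic_lt_exp hnonneg hε] with ω hω
  exact eventually_one_div_mul_log_le_of_dyadic hε.le (fun t => hnonneg t ω) (hrc ω)
    (hω.mono fun n hn m i => (hn m i).le)

end MeasureTheory

theorem supermartingale_limsup_log_le_zero {Ω : Type*} {m0 : MeasurableSpace Ω}
    {P : Measure Ω} [IsProbabilityMeasure P]
    (ℱ : Filtration ℝ m0) (Z : ℝ → Ω → ℝ)
    (hZ : Supermartingale Z ℱ P)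
    (hpos : ∀ t ω, 0 ≤ Z t ω)
    (hrc : ∀ ω t, ContinuousWithinAt (fun s => Z s ω) (Set.Ici t) t) :
    ∀ᵐ ω ∂P, limsup (fun t : ℝ => (1 / t) * Real.log (Z t ω)) atTop ≤ 0 := by
  have hrate (j : ℕ) : ∀ᵐ ω ∂P, ∀ᶠ t in atTop, 1 / t * Real.log (Z t ω) ≤ 1 / (j + 1) :=
    hZ.ae_eventually_one_div_mul_log_le hpos hrc (by positivity)
  filter_upwards [ae_all_iff.mpr hrate] with ω hω
  exact limsup_nonpos_of_forall_eventually_le_one_div hω
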